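/- (Thakur's function field analogue of Lucas' theorem.) Let ℘ be a prime of degree h in A. Let α, β ∈ ℤ_{≥0} with q^h-adic expansions α = Σ_i α_i q^{hi} and β = Σ_i β_i q^{hi}, where 0 ≤ α_i, β_i < q^h. Then binom(α,β)_C ≡ ∏_i binom(α_i,β_i)_C (mod ℘). -/

import Mathlib

open Polynomial

/-- `D_i = ∏_{r=0}^{i-1} (T^{q^i} - T^{q^r})`, with `D_0 = 1`. -/
noncomputable def carlitzD (Fq : Type*) [Field Fq] (q i : ℕ) : Polynomial Fq :=
  ∏ r ∈ Finset.range i, (X ^ q ^ i - X ^ q ^ r)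

/-- The Carlitz factorial `n!_C = ∏_i D_i^{n_i}`, where `n = Σ n_i q^i` is the
`q`-adic expansion of `n` (the digit `n_i` is `n / q^i % q`). -/
noncomputable def carlitzFactorial (Fq : Type*) [Field Fq] (q n : ℕ) : Polynomial Fq :=
  ∏ i ∈ Finset.range (n + 1), carlitzD Fq q i ^ (n / q ^ i % q)

/-- The Carlitz binomial coefficient `binom(n,m)_C = n!_C / (m!_C (n-m)!_C)` for `m ≤ n`,
and `0` otherwise. -/
noncomputable def carlitzBinom (Fq : Type*) [Field Fq] (q n m : ℕ) : Polynomial Fq :=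
  if m ≤ n then
    carlitzFactorial Fq q n / (carlitzFactorial Fq q m * carlitzFactorial Fq q (n - m))
  else 0

/-!
Write `[i] = X^{q^i} - X`. In characteristic `p` we have `X^{q^i} - X^{q^r} = [i-r]^{q^r}`, so
`D_i = ∏_{1 ≤ j ≤ i} [j]^{q^{i-j}}`, and collecting exponents gives the Legendre-type formula
`n!_C = ∏_{j ≥ 1} [j]^{⌊n/q^j⌋}`. Hence `binom(a+b, b)_C = ∏_{j ≥ 1} [j]^{c_j}`, where
`c_j ∈ {0, 1}` is the carry into position `j` when adding `a` and `b` in base `q`.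

Modulo a prime `℘` of degree `h` we have `℘ ∣ [h]` and `[h + k] ≡ [k]`. Write `a = a₀ + q^h a'`
and `b = b₀ + q^h b'` with `a₀, b₀ < q^h`. If `a₀ + b₀ < q^h`, the carries at positions `j ≤ h`
are those of `a₀ + b₀`, and the carry at position `h + k` is that of `a' + b'` at position `k`, so
`binom(a+b, b)_C ≡ binom(a₀+b₀, b₀)_C · binom(a'+b', b')_C`. Otherwise there is a carry at
position `h`, and both sides vanish modulo `℘`. Iterating over the base-`q^h` digits gives the
theorem.
-/

open Polynomial Finset

namespace Nat

/-- The carry into position `j` when `a` and `b` are added in base `q`. -/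
def carry (q a b j : ℕ) : ℕ := (a + b) / q ^ j - a / q ^ j - b / q ^ j

theorem div_pow_add_div_pow_add_carry (q a b j : ℕ) :
    a / q ^ j + b / q ^ j + carry q a b j = (a + b) / q ^ j := by
  have := Nat.div_add_div_le_add_div (x := a) (y := b) (z := q ^ j)
  unfold carry
  omega

theorem carry_add_mul_pow_of_le {q h j : ℕ} (hq : 0 < q) (hj : j ≤ h) (a₀ b₀ a b : ℕ) :
    carry q (a₀ + q ^ h * a) (b₀ + q ^ h * b) j = carry q a₀ b₀ j := by
  have hdiv : ∀ x y, (x + q ^ h * y) / q ^ j = x / q ^ j + q ^ (h - j) * y := fun x y => by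
    rw [← Nat.add_mul_div_right _ _ (Nat.pow_pos (n := j) hq), mul_right_comm, ← pow_add,
      Nat.sub_add_cancel hj]
  unfold carry
  rw [show a₀ + q ^ h * a + (b₀ + q ^ h * b) = a₀ + b₀ + q ^ h * (a + b) by ring, hdiv, hdiv, hdiv,
    mul_add]
  omega

theorem carry_add_mul_pow_add {q h : ℕ} (hq : 0 < q) {a₀ b₀ : ℕ} (h₀ : a₀ + b₀ < q ^ h)
    (a b k : ℕ) : carry q (a₀ + q ^ h * a) (b₀ + q ^ h * b) (k + h) = carry q a b k := by
  have hdiv : ∀ x y, x < q ^ h → (x + q ^ h * y) / q ^ (k + h) = y / q ^ k := fun x y hx => by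
    rw [add_comm k, pow_add, ← Nat.div_div_eq_div_mul, mul_comm (q ^ h) y,
      Nat.add_mul_div_right _ _ (Nat.pow_pos (n := h) hq), Nat.div_eq_of_lt hx, zero_add]
  unfold carry
  rw [show a₀ + q ^ h * a + (b₀ + q ^ h * b) = a₀ + b₀ + q ^ h * (a + b) by ring,
    hdiv _ _ h₀, hdiv _ _ (by omega), hdiv _ _ (by omega)]

theorem carry_pos_of_mod_lt {q h a b : ℕ} (hq : 0 < q) (hab : (a + b) % q ^ h < b % q ^ h) :
    0 < carry q a b h := by
  unfold carry
  rw [Nat.add_div (Nat.pow_pos (n := h) hq), if_pos]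
  · omega
  · by_contra hlt
    rw [Nat.add_mod, Nat.mod_eq_of_lt (not_le.1 hlt)] at hab
    exact (Nat.le_add_left _ _).not_gt hab

theorem sum_range_div_pow_mod_mul_pow (q n L : ℕ) :
    ∑ k ∈ range L, n / q ^ k % q * q ^ k = n % q ^ L := by
  induction L with
  | zero => simp [Nat.mod_one]
  | succ L ih => rw [sum_range_succ, ih, Nat.mod_pow_succ, mul_comm]

theorem sum_Ico_div_pow_mod_mul_pow {q n j N : ℕ} (hq : 0 < q) (hj : j ≤ N) (hn : n < q ^ N) :
    ∑ i ∈ Ico j N, n / q ^ i % q * q ^ (i - j) = n / q ^ j := by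
  rw [sum_Ico_eq_sum_range]
  simp_rw [Nat.add_sub_cancel_left, pow_add, ← Nat.div_div_eq_div_mul]
  rw [sum_range_div_pow_mod_mul_pow, Nat.mod_eq_of_lt]
  rwa [Nat.div_lt_iff_lt_mul (Nat.pow_pos (n := j) hq), ← pow_add, Nat.sub_add_cancel hj]

theorem eq_prod_digits_mul {M : Type*} [CommMonoid M] {Q : ℕ} (hQ : 0 < Q) (f : ℕ → ℕ → M)
    (hf : ∀ a₀ b₀ a b, a₀ < Q → b₀ < Q → f (a₀ + Q * a) (b₀ + Q * b) = f a₀ b₀ * f a b)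
    (N a b : ℕ) :
    f a b = (∏ i ∈ range N, f (a / Q ^ i % Q) (b / Q ^ i % Q)) * f (a / Q ^ N) (b / Q ^ N) := by
  induction N generalizing a b with
  | zero => simp
  | succ N ih =>
    conv_lhs => rw [← Nat.mod_add_div a Q, ← Nat.mod_add_div b Q]
    rw [hf _ _ _ _ (Nat.mod_lt a hQ) (Nat.mod_lt b hQ), ih (a / Q) (b / Q), prod_range_succ']
    simp only [pow_succ', ← Nat.div_div_eq_div_mul, pow_zero, Nat.div_one]
    ac_rfl

end Nat

theorem carlitzFactorial_eq_prod_range (Fq : Type*) [Field Fq] {q n N : ℕ} (hq : 1 < q)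
    (hn : n < q ^ N) :
    carlitzFactorial Fq q n = ∏ i ∈ range N, carlitzD Fq q i ^ (n / q ^ i % q) := by
  have hdigit : ∀ i, n < q ^ i → carlitzD Fq q i ^ (n / q ^ i % q) = 1 := fun i hi => by
    rw [Nat.div_eq_of_lt hi, Nat.zero_mod, pow_zero]
  have hle : ∀ {i M}, M ≤ i → n < q ^ M → n < q ^ i := fun hMi hM =>
    hM.trans_le (Nat.pow_le_pow_right (by omega) hMi)
  rcases le_total N (n + 1) with hN | hN
  · refine (prod_subset (range_subset_range.2 hN) fun i _ hi => hdigit i ?_).symm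
    exact hle (not_lt.1 (mem_range.not.1 hi)) hn
  · refine prod_subset (range_subset_range.2 hN) fun i _ hi => hdigit i ?_
    exact hle (Nat.le_of_succ_le (not_lt.1 (mem_range.not.1 hi))) (Nat.lt_pow_self hq)

theorem carlitzBinom_of_lt (Fq : Type*) [Field Fq] {q n m : ℕ} (h : n < m) :
    carlitzBinom Fq q n m = 0 :=
  if_neg (not_le.2 h)

theorem carlitzBinom_zero_zero (Fq : Type*) [Field Fq] (q : ℕ) : carlitzBinom Fq q 0 0 = 1 := by
  simp [carlitzBinom, carlitzFactorial]

noncomputable def carlitzBracket (Fq : Type*) [Field Fq] (q i : ℕ) : Fq[X] := X ^ q ^ i - X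

section FiniteField

variable {Fq : Type*} [Field Fq] [Fintype Fq]

local notation "q" => Fintype.card Fq

theorem FiniteField.expand_card_pow (f : Fq[X]) (r : ℕ) : expand Fq (q ^ r) f = f ^ q ^ r := by
  induction r with
  | zero => simp
  | succ r ih => rw [pow_succ', expand_mul, ih, FiniteField.expand_card, ← pow_mul, mul_comm]

theorem carlitzBracket_ne_zero {i : ℕ} (hi : i ≠ 0) : carlitzBracket Fq q i ≠ 0 :=
  FiniteField.X_pow_card_pow_sub_X_ne_zero Fq hi Fintype.one_lt_card

theorem carlitzBracket_pow_card_pow (i r : ℕ) :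
    carlitzBracket Fq q i ^ q ^ r = X ^ q ^ (i + r) - X ^ q ^ r := by
  rw [← FiniteField.expand_card_pow, carlitzBracket, map_sub, map_pow, expand_X, ← pow_mul,
    ← pow_add, add_comm r]

theorem carlitzD_eq_prod_carlitzBracket (i : ℕ) :
    carlitzD Fq q i = ∏ j ∈ Ico 1 (i + 1), carlitzBracket Fq q j ^ q ^ (i - j) := by
  refine prod_nbij' (fun r => i - r) (fun j => i - j) ?_ ?_ ?_ ?_ fun r hr => ?_
  any_goals (intro x hx; simp only [mem_range, mem_Ico] at hx ⊢; omega)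
  rw [carlitzBracket_pow_card_pow, Nat.sub_sub_self (mem_range.1 hr).le,
    Nat.sub_add_cancel (mem_range.1 hr).le]

theorem carlitzFactorial_eq_prod_carlitzBracket {n N : ℕ} (hn : n < q ^ N) :
    carlitzFactorial Fq q n = ∏ j ∈ Ico 1 N, carlitzBracket Fq q j ^ (n / q ^ j) := by
  have hq : 1 < q := Fintype.one_lt_card
  calc carlitzFactorial Fq q n
      = ∏ i ∈ range N, ∏ j ∈ Ico 1 (i + 1),
          carlitzBracket Fq q j ^ (n / q ^ i % q * q ^ (i - j)) := by
        rw [carlitzFactorial_eq_prod_range Fq hq hn]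
        simp_rw [carlitzD_eq_prod_carlitzBracket, ← prod_pow, ← pow_mul, mul_comm]
    _ = ∏ j ∈ Ico 1 N, ∏ i ∈ Ico j N, carlitzBracket Fq q j ^ (n / q ^ i % q * q ^ (i - j)) :=
        prod_comm' fun i j => by simp only [mem_range, mem_Ico]; omega
    _ = ∏ j ∈ Ico 1 N, carlitzBracket Fq q j ^ (n / q ^ j) := prod_congr rfl fun j hj => by
        rw [prod_pow_eq_pow_sum,
          Nat.sum_Ico_div_pow_mod_mul_pow (by omega) (mem_Ico.1 hj).2.le hn]

theorem carlitzFactorial_ne_zero (n : ℕ) : carlitzFactorial Fq q n ≠ 0 := by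
  rw [carlitzFactorial_eq_prod_carlitzBracket (Nat.lt_pow_self (n := n) Fintype.one_lt_card)]
  exact prod_ne_zero_iff.2 fun j hj =>
    pow_ne_zero _ (carlitzBracket_ne_zero (by simp only [mem_Ico] at hj; omega))

theorem carlitzBinom_add_eq_prod_carlitzBracket {a b N : ℕ} (h : a + b < q ^ N) :
    carlitzBinom Fq q (a + b) b = ∏ j ∈ Ico 1 N, carlitzBracket Fq q j ^ Nat.carry q a b j := by
  rw [carlitzBinom, if_pos (Nat.le_add_left b a), Nat.add_sub_cancel]
  refine (EuclideanDomain.eq_div_of_mul_eq_right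
    (mul_ne_zero (carlitzFactorial_ne_zero b) (carlitzFactorial_ne_zero a)) ?_).symm
  rw [carlitzFactorial_eq_prod_carlitzBracket (by omega : b < q ^ N),
    carlitzFactorial_eq_prod_carlitzBracket (by omega : a < q ^ N),
    carlitzFactorial_eq_prod_carlitzBracket h, ← prod_mul_distrib, ← prod_mul_distrib]
  refine prod_congr rfl fun j _ => ?_
  rw [← pow_add, ← pow_add, add_comm (b / _), Nat.div_pow_add_div_pow_add_carry]

theorem carlitzBracket_add_sub (h k : ℕ) :
    carlitzBracket Fq q (k + h) - carlitzBracket Fq q k = carlitzBracket Fq q h ^ q ^ k := by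
  rw [carlitzBracket_pow_card_pow, carlitzBracket, carlitzBracket, add_comm]
  ring

variable {℘ : Fq[X]} (hirr : Irreducible ℘)
include hirr

local notation "Q" => q ^ ℘.natDegree

theorem dvd_carlitzBracket_natDegree : ℘ ∣ carlitzBracket Fq q ℘.natDegree := by
  rw [carlitzBracket, Fintype.card_eq_nat_card]
  exact hirr.natDegree_dvd_iff_dvd_X_pow_card_pow_sub_X.1 dvd_rfl

theorem mk_carlitzBracket_add_natDegree (k : ℕ) :
    AdjoinRoot.mk ℘ (carlitzBracket Fq q (k + ℘.natDegree)) =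
      AdjoinRoot.mk ℘ (carlitzBracket Fq q k) := by
  rw [AdjoinRoot.mk_eq_mk, carlitzBracket_add_sub]
  exact (dvd_carlitzBracket_natDegree hirr).trans
    (dvd_pow_self _ (pow_ne_zero _ Fintype.card_ne_zero))

theorem mk_carlitzBinom_add_mul_of_add_lt {a₀ b₀ : ℕ} (h₀ : a₀ + b₀ < Q) (a b : ℕ) :
    AdjoinRoot.mk ℘ (carlitzBinom Fq q (a₀ + Q * a + (b₀ + Q * b)) (b₀ + Q * b)) =
      AdjoinRoot.mk ℘ (carlitzBinom Fq q (a₀ + b₀) b₀) *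
        AdjoinRoot.mk ℘ (carlitzBinom Fq q (a + b) b) := by
  have hq : 1 < q := Fintype.one_lt_card
  obtain ⟨N, hN1, hN⟩ : ∃ N, 1 ≤ N ∧ a + b + 1 ≤ q ^ N :=
    ⟨a + b + 1, by omega, (Nat.lt_pow_self hq).le⟩
  have hsum : a₀ + Q * a + (b₀ + Q * b) < q ^ (℘.natDegree + N) := by
    have := Nat.mul_le_mul_left Q hN
    rw [pow_add]
    nlinarith
  rw [carlitzBinom_add_eq_prod_carlitzBracket hsum,
    ← prod_Ico_consecutive _ (Nat.le_add_left 1 _) (Nat.add_le_add_left hN1 _),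
    carlitzBinom_add_eq_prod_carlitzBracket (N := ℘.natDegree + 1)
      (h₀.trans (Nat.pow_lt_pow_right hq (lt_add_one _))),
    carlitzBinom_add_eq_prod_carlitzBracket (N := N) (by omega), map_mul]
  congr 1
  · refine congrArg _ (prod_congr rfl fun j hj => ?_)
    rw [Nat.carry_add_mul_pow_of_le (by omega) (by simp only [mem_Ico] at hj; omega)]
  · rw [add_comm ℘.natDegree 1, add_comm ℘.natDegree N, ← prod_Ico_add', map_prod, map_prod]
    refine prod_congr rfl fun k _ => ?_
    rw [Nat.carry_add_mul_pow_add (by omega) h₀, map_pow, map_pow,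
      mk_carlitzBracket_add_natDegree hirr]

theorem mk_carlitzBinom_add_mul {α₀ β₀ : ℕ} (hα₀ : α₀ < Q) (hβ₀ : β₀ < Q) (α β : ℕ) :
    AdjoinRoot.mk ℘ (carlitzBinom Fq q (α₀ + Q * α) (β₀ + Q * β)) =
      AdjoinRoot.mk ℘ (carlitzBinom Fq q α₀ β₀) * AdjoinRoot.mk ℘ (carlitzBinom Fq q α β) := by
  rcases le_or_gt β₀ α₀ with h₀ | h₀
  · rcases le_or_gt β α with h₁ | h₁
    · obtain ⟨a₀, rfl⟩ := Nat.exists_eq_add_of_le' h₀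
      obtain ⟨a, rfl⟩ := Nat.exists_eq_add_of_le' h₁
      rw [show a₀ + β₀ + Q * (a + β) = a₀ + Q * a + (β₀ + Q * β) by ring]
      exact mk_carlitzBinom_add_mul_of_add_lt hirr hα₀ a β
    · have : α₀ + Q * α < β₀ + Q * β := by
        have := Nat.mul_le_mul_left Q h₁
        nlinarith
      rw [carlitzBinom_of_lt Fq this, carlitzBinom_of_lt Fq h₁, map_zero, mul_zero]
  · rw [carlitzBinom_of_lt Fq h₀, map_zero, zero_mul]
    rcases le_or_gt (β₀ + Q * β) (α₀ + Q * α) with h₁ | h₁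
    · obtain ⟨a, ha⟩ := Nat.exists_eq_add_of_le' h₁
      have hcarry : 0 < Nat.carry q a (β₀ + Q * β) ℘.natDegree := by
        apply Nat.carry_pos_of_mod_lt Fintype.card_pos
        rwa [← ha, Nat.add_mul_mod_self_left, Nat.add_mul_mod_self_left, Nat.mod_eq_of_lt hα₀,
          Nat.mod_eq_of_lt hβ₀]
      obtain ⟨N, hlt, hN⟩ : ∃ N, a + (β₀ + Q * β) + ℘.natDegree < N ∧ N < q ^ N :=
        ⟨_, lt_add_one _, Nat.lt_pow_self Fintype.one_lt_card⟩
      rw [ha, AdjoinRoot.mk_eq_zero, carlitzBinom_add_eq_prod_carlitzBracket (N := N) (by omega)]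
      refine (dvd_carlitzBracket_natDegree hirr).trans ((dvd_pow_self _ hcarry.ne').trans
        (dvd_prod_of_mem _ (mem_Ico.2 ⟨hirr.natDegree_pos, by omega⟩)))
    · rw [carlitzBinom_of_lt Fq h₁, map_zero]

end FiniteField

theorem carlitz_lucas_general (Fq : Type*) [Field Fq] [Fintype Fq]
    (p s : ℕ) (hcard : Fintype.card Fq = p ^ s)
    (h : ℕ) (℘ : Polynomial Fq) (hirr : Irreducible ℘) (hdeg : ℘.natDegree = h)
    (α β : ℕ) :
    ℘ ∣ (carlitzBinom Fq (p ^ s) α β -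
      ∏ i ∈ Finset.range (α + β + 1),
        carlitzBinom Fq (p ^ s) (α / ((p ^ s) ^ h) ^ i % (p ^ s) ^ h)
          (β / ((p ^ s) ^ h) ^ i % (p ^ s) ^ h)) := by
  subst hdeg
  rw [← hcard, ← AdjoinRoot.mk_eq_mk, map_prod]
  have hQ : 1 < Fintype.card Fq ^ ℘.natDegree :=
    Nat.one_lt_pow hirr.natDegree_pos.ne' Fintype.one_lt_card
  have hN := Nat.lt_pow_self (n := α + β + 1) hQ
  refine (Nat.eq_prod_digits_mul (zero_lt_one.trans hQ)
    (fun a b => AdjoinRoot.mk ℘ (carlitzBinom Fq (Fintype.card Fq) a b))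
    (fun _ _ a b ha hb => mk_carlitzBinom_add_mul hirr ha hb a b) (α + β + 1) α β).trans ?_
  rw [Nat.div_eq_of_lt (by omega : α < _), Nat.div_eq_of_lt (by omega : β < _),
    carlitzBinom_zero_zero, map_one, mul_one]

/-- Thakur's function field analogue of Lucas' theorem: if `℘` is a prime of degree `h`
in `A = F_q[T]`, and `α = Σ α_i q^{hi}`, `β = Σ β_i q^{hi}` are the `q^h`-adic expansions
(the digit at position `i` being `α / (q^h)^i % q^h`), then
`binom(α,β)_C ≡ ∏_i binom(α_i,β_i)_C (mod ℘)`. -/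
theorem carlitz_lucas (Fq : Type*) [Field Fq] [Fintype Fq]
    (p s : ℕ) (hp : p.Prime) (hs : 0 < s) (hcard : Fintype.card Fq = p ^ s)
    (h : ℕ) (℘ : Polynomial Fq) (hirr : Irreducible ℘) (hdeg : ℘.natDegree = h)
    (α β : ℕ) :
    ℘ ∣ (carlitzBinom Fq (p ^ s) α β -
      ∏ i ∈ Finset.range (α + β + 1),
        carlitzBinom Fq (p ^ s) (α / ((p ^ s) ^ h) ^ i % (p ^ s) ^ h)
          (β / ((p ^ s) ^ h) ^ i % (p ^ s) ^ h)) :=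
  carlitz_lucas_general Fq p s hcard h ℘ hirr hdeg α β
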